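/- For the Lie algebra L^P = L(1,0), the bilinear form ω_{RE}(x,y) = E*([x,y]) + ξ (H*∧A*)(x,y) is nondegenerate for every scalar ξ, where (H*∧A*)(x,y) = H*(x)A*(y) − H*(y)A*(x). -/

import Mathlib

/-!
Pair the basis `H, A, B, E` against its reversal `E, B, A, H`. For every `ξ` the resulting Gram
matrix `ω(bᵢ, b_{σ j})` is upper triangular with diagonal `1, 1, -1, -1`: the `ξ`-term only touches
the pair `{H, A}`, which sits above the diagonal, and `E` commutes with `A` and `B`.
Hence the determinant is `±1`.
-/

open LinearMap (BilinForm)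

theorem LinearMap.BilinForm.nondegenerate_of_isUpperTriangular_submatrix
    {K M ι : Type*} [Field K] [AddCommGroup M] [Module K M] [Fintype ι] [DecidableEq ι]
    [LinearOrder ι] {ω : BilinForm K M} (b : Module.Basis ι K M) (σ : Equiv.Perm ι)
    (h_lower : ∀ i j, j < i → ω (b i) (b (σ j)) = 0) (h_diag : ∀ i, ω (b i) (b (σ i)) ≠ 0) :
    ω.Nondegenerate := by
  rw [BilinForm.nondegenerate_iff_det_ne_zero b]
  have h_tri : Matrix.IsUpperTriangular ((BilinForm.toMatrix b ω).submatrix _root_.id σ) :=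
    fun i j hji => by simpa using h_lower i j hji
  have h_det := Matrix.det_permute' σ (BilinForm.toMatrix b ω)
  rw [Matrix.det_of_isUpperTriangular h_tri] at h_det
  intro h_zero
  rw [h_zero, mul_zero] at h_det
  exact Finset.prod_ne_zero_iff.mpr (fun i _ => by simpa using h_diag i) h_det

section OmegaRE

variable {K L : Type*} [Field K] [LieRing L] [LieAlgebra K L]

/-- `ω_RE`, in the basis `{H, A, B, E} = {b 0, b 1, b 2, b 3}`. -/
noncomputable def omegaRE (b : Module.Basis (Fin 4) K L) (ξ : K) : BilinForm K L :=
  (LieModule.toEnd K L L : L →ₗ[K] Module.End K L).compr₂ (b.coord 3) +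
    ξ • ((b.coord 0).smulRight (b.coord 1) - (b.coord 1).smulRight (b.coord 0))

theorem omegaRE_apply (b : Module.Basis (Fin 4) K L) (ξ : K) (x y : L) :
    omegaRE b ξ x y =
      b.coord 3 ⁅x, y⁆ + ξ * (b.coord 0 x * b.coord 1 y - b.coord 0 y * b.coord 1 x) := by
  simp only [omegaRE, LinearMap.add_apply, LinearMap.smul_apply, LinearMap.sub_apply,
    LinearMap.coe_smulRight, LinearMap.compr₂_apply, LieHom.coe_toLinearMap,
    LieModule.toEnd_apply_apply, smul_eq_mul]
  ring

theorem omegaRE_nondegenerate (b : Module.Basis (Fin 4) K L)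
    (hHE : ⁅b 0, b 3⁆ = b 3) (hAB : ⁅b 1, b 2⁆ = b 3) (hEA : ⁅b 3, b 1⁆ = 0)
    (hEB : ⁅b 3, b 2⁆ = 0) (ξ : K) : (omegaRE b ξ).Nondegenerate := by
  have hAE : ⁅b 1, b 3⁆ = 0 := by rw [← lie_skew, hEA, neg_zero]
  have hBE : ⁅b 2, b 3⁆ = 0 := by rw [← lie_skew, hEB, neg_zero]
  have hBA : ⁅b 2, b 1⁆ = -b 3 := by rw [← lie_skew, hAB]
  have hEH : ⁅b 3, b 0⁆ = -b 3 := by rw [← lie_skew, hHE]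
  refine BilinForm.nondegenerate_of_isUpperTriangular_submatrix b Fin.revPerm ?_ ?_
  · intro i j hji
    fin_cases i <;> fin_cases j <;> simp_all [omegaRE_apply, Fin.rev]
  · intro i
    fin_cases i <;> simp [omegaRE_apply, Fin.rev, *]

end OmegaRE

theorem stmt3 {K : Type} [Field K] {L : Type} [LieRing L] [LieAlgebra K L]
    (b : Module.Basis (Fin 4) K L)
    (hHE : ⁅b 0, b 3⁆ = b 3)
    (hAB : ⁅b 1, b 2⁆ = b 3) (hEA : ⁅b 3, b 1⁆ = 0) (hEB : ⁅b 3, b 2⁆ = 0)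
    (ξ : K) :
    ∀ x : L,
      (∀ y : L,
        b.coord 3 ⁅x, y⁆ + ξ * (b.coord 0 x * b.coord 1 y - b.coord 0 y * b.coord 1 x) = 0) →
      x = 0 := by
  intro x hx
  exact (omegaRE_nondegenerate b hHE hAB hEA hEB ξ).1 x fun y => by rw [omegaRE_apply, hx y]
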